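/- For all positive even integers a, b, a', b' with (a,b) ≠ (a',b'), there exist positive even integers c, d and nonnegative integers k₁, k₂, l₁, l₂ such that the string 0^a#0^b#0^c#0^d#0^{k₁}#0^{k₂}#0^{l₁}#0^{l₂} is a yes-instance of the promise problem XOR-EQ and the string 0^{a'}#0^{b'}#0^c#0^d#0^{k₁}#0^{k₂}#0^{l₁}#0^{l₂} is a no-instance of XOR-EQ. -/

import Mathlib

/-- The alphabet `{0, #}` (`z` is the symbol `0`, `h` is the symbol `#`). -/
inductive XSym : Type
  | z : XSym
  | h : XSym
deriving DecidableEq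

/-- The block `0^n`. -/
def zeros (n : ℕ) : List XSym := List.replicate n XSym.z

/-- The string `0^a # 0^b # 0^c # 0^d # 0^{k1} # 0^{k2} # 0^{l1} # 0^{l2}`. -/
def xweWord (a b c d k1 k2 l1 l2 : ℕ) : List XSym :=
  zeros a ++ [XSym.h] ++ zeros b ++ [XSym.h] ++ zeros c ++ [XSym.h] ++ zeros d ++ [XSym.h] ++
    zeros k1 ++ [XSym.h] ++ zeros k2 ++ [XSym.h] ++ zeros l1 ++ [XSym.h] ++ zeros l2

/-- `(-1) ^ [u = v]`. -/
def xweSign (u v : ℕ) : ℤ := if u = v then -1 else 1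

/-- The promise of the problem `XOR-EQ`. -/
def xwePromise (a b c d k1 k2 l1 l2 : ℕ) : Prop :=
  0 < a ∧ Even a ∧ 0 < b ∧ Even b ∧ 0 < c ∧ Even c ∧ 0 < d ∧ Even d ∧
    (a : ℤ) - (c : ℤ) + xweSign a c * ((k1 : ℤ) - (k2 : ℤ)) =
      (b : ℤ) - (d : ℤ) + xweSign b d * ((l1 : ℤ) - (l2 : ℤ))

/-- Yes-instances of `XOR-EQ`: promised strings where exactly one of
`a = c`, `b = d` holds. -/
def XorEqYes : Set (List XSym) :=
  {w | ∃ a b c d k1 k2 l1 l2 : ℕ, xwePromise a b c d k1 k2 l1 l2 ∧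
    Xor' (a = c) (b = d) ∧ w = xweWord a b c d k1 k2 l1 l2}

/-- No-instances of `XOR-EQ`: the remaining promised strings. -/
def XorEqNo : Set (List XSym) :=
  {w | ∃ a b c d k1 k2 l1 l2 : ℕ, xwePromise a b c d k1 k2 l1 l2 ∧
    ¬ Xor' (a = c) (b = d) ∧ w = xweWord a b c d k1 k2 l1 l2}

/-! If `a ≠ a'`, take `c = a` and `d` distinct from `b` and `b'`: then `a = c` is the only
equality for `(a, b)` and there is none for `(a', b')`; the case `a = a'` (so `b ≠ b'`) is the
mirror image. The two promise equations are then a linear system in `k₁ - k₂` and `l₁ - l₂`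
whose determinant is `±2`, and it has an integral solution because `a, b, a', b', c, d` are all
even. -/

lemma exists_nat_sub_eq (t : ℤ) : ∃ m n : ℕ, (m : ℤ) - n = t :=
  ⟨t.toNat, (-t).toNat, by omega⟩

lemma xweSign_self (u : ℕ) : xweSign u u = -1 := if_pos rfl

lemma xweSign_of_ne {u v : ℕ} (h : u ≠ v) : xweSign u v = 1 := if_neg h

lemma xwePromise_comm {a b c d k1 k2 l1 l2 : ℕ} :
    xwePromise a b c d k1 k2 l1 l2 ↔ xwePromise b a d c l1 l2 k1 k2 := by
  unfold xwePromise
  constructor <;>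
  · rintro ⟨ha, hae, hb, hbe, hc, hce, hd, hde, h⟩
    exact ⟨hb, hbe, ha, hae, hd, hde, hc, hce, h.symm⟩

lemma exists_yes_no_completion_of_fst_ne {a b a' b' d : ℕ}
    (ha : 0 < a) (hae : Even a) (hb : 0 < b) (hbe : Even b)
    (ha' : 0 < a') (hae' : Even a') (hb' : 0 < b') (hbe' : Even b')
    (hd : 0 < d) (hde : Even d) (hne : a ≠ a') (hbd : b ≠ d) (hbd' : b' ≠ d) :
    ∃ k1 k2 l1 l2 : ℕ,
      (xwePromise a b a d k1 k2 l1 l2 ∧ Xor' (a = a) (b = d)) ∧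
      (xwePromise a' b' a d k1 k2 l1 l2 ∧ ¬ Xor' (a' = a) (b' = d)) := by
  obtain ⟨r, hr⟩ := hae
  obtain ⟨s, hs⟩ := hbe
  obtain ⟨r', hr'⟩ := hae'
  obtain ⟨s', hs'⟩ := hbe'
  obtain ⟨l1, l2, hl⟩ := exists_nat_sub_eq ((r' : ℤ) - r - s - s' + d)
  obtain ⟨k1, k2, hk⟩ := exists_nat_sub_eq ((d : ℤ) - b - ((l1 : ℤ) - l2))
  refine ⟨k1, k2, l1, l2, ⟨⟨ha, ⟨r, hr⟩, hb, ⟨s, hs⟩, ha, ⟨r, hr⟩, hd, hde, ?_⟩, .inl ⟨rfl, hbd⟩⟩,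
    ⟨⟨ha', ⟨r', hr'⟩, hb', ⟨s', hs'⟩, ha, ⟨r, hr⟩, hd, hde, ?_⟩, by simp [Xor', Ne.symm hne, hbd']⟩⟩
  · rw [xweSign_self, xweSign_of_ne hbd]
    linarith
  · rw [xweSign_of_ne (Ne.symm hne), xweSign_of_ne hbd']
    have halves : (a : ℤ) = r + r ∧ (b : ℤ) = s + s ∧ (a' : ℤ) = r' + r' ∧ (b' : ℤ) = s' + s' := by
      omega
    linarith

lemma exists_yes_no_completion {a b a' b' : ℕ}
    (ha : 0 < a) (hae : Even a) (hb : 0 < b) (hbe : Even b)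
    (ha' : 0 < a') (hae' : Even a') (hb' : 0 < b') (hbe' : Even b') (hne : (a, b) ≠ (a', b')) :
    ∃ c d k1 k2 l1 l2 : ℕ,
      (xwePromise a b c d k1 k2 l1 l2 ∧ Xor' (a = c) (b = d)) ∧
      (xwePromise a' b' c d k1 k2 l1 l2 ∧ ¬ Xor' (a' = c) (b' = d)) := by
  by_cases hA : a = a'
  · have hB : b ≠ b' := fun hB => hne (by rw [hA, hB])
    obtain ⟨l1, l2, k1, k2, ⟨hyes, hyesx⟩, ⟨hno, hnox⟩⟩ :=
      exists_yes_no_completion_of_fst_ne hb hbe ha hae hb' hbe' ha' hae' (d := a + a' + 2)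
        (by omega) ((hae.add hae').add even_two) hB (by omega) (by omega)
    exact ⟨a + a' + 2, b, k1, k2, l1, l2, ⟨xwePromise_comm.2 hyes, hyesx.symm⟩,
      ⟨xwePromise_comm.2 hno, fun h => hnox h.symm⟩⟩
  · exact ⟨a, b + b' + 2, exists_yes_no_completion_of_fst_ne ha hae hb hbe ha' hae' hb' hbe'
      (by omega) ((hbe.add hbe').add even_two) hA (by omega) (by omega)⟩

/-- any two distinct pairs of positive even numbers can be completed
to a yes-instance and a no-instance of `XOR-EQ` by a common suffix. -/
theorem stmt3 (a b a' b' : ℕ)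
    (ha : 0 < a) (hae : Even a) (hb : 0 < b) (hbe : Even b)
    (ha' : 0 < a') (hae' : Even a') (hb' : 0 < b') (hbe' : Even b')
    (hne : (a, b) ≠ (a', b')) :
    ∃ c d k1 k2 l1 l2 : ℕ, 0 < c ∧ Even c ∧ 0 < d ∧ Even d ∧
      xweWord a b c d k1 k2 l1 l2 ∈ XorEqYes ∧
      xweWord a' b' c d k1 k2 l1 l2 ∈ XorEqNo := by
  obtain ⟨c, d, k1, k2, l1, l2, ⟨hyes, hyesx⟩, ⟨hno, hnox⟩⟩ :=
    exists_yes_no_completion ha hae hb hbe ha' hae' hb' hbe' hne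
  obtain ⟨-, -, -, -, hc, hce, hd, hde, -⟩ := id hyes
  exact ⟨c, d, k1, k2, l1, l2, hc, hce, hd, hde, ⟨a, b, c, d, k1, k2, l1, l2, hyes, hyesx, rfl⟩,
    ⟨a', b', c, d, k1, k2, l1, l2, hno, hnox, rfl⟩⟩
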